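/- arXiv:2106.07539 — 4 statements merged into one kernel-verified Lean document; each statement's English description precedes it below -/
import Mathlib

section
/- For any function g in the Barron space B^1_R(Ω) (defined via integral representations against probability measures on parameters with w-marginal supported in the closed ball of radius R), the Barron norms with index p coincide for all 1 ≤ p ≤ ∞: ‖g‖_{B^∞_R(Ω)} = ‖g‖_{B^p_R(Ω)} = ‖g‖_{B^1_R(Ω)}. -/
/-!
Let `ρ` represent `g` with `L = ∫ |a| dρ < ∞`, and let `δ > 0`. Reweighting `ρ` by the density
`(|a| + δ) / (L + δ)` and replacing the amplitude `a` by `(L + δ) a / (|a| + δ)` leaves the measure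
`a · ρ`, hence every integral `∫ a σ(wᵀx + b) dρ`, unchanged, while the new amplitude is bounded
by `L + δ`. So `‖g‖_{B^∞} ≤ ‖g‖_{B^1}`; on probability measures `‖·‖_{B^p}` is monotone in `p`,
which squeezes every `B^p` norm in between.
-/

open MeasureTheory Real
open scoped ENNReal NNReal

noncomputable section

/-- Euclidean space `ℝ^d`. -/
abbrev Rd (d : ℕ) := EuclideanSpace ℝ (Fin d)

/-- The set of admissible representing measures for `g` on `Ω` with activation `σ`
and support radius `R`: probability measures on the parameter space `ℝ × ℝ^d × ℝ`
whose `w`-marginal is supported in the closed ball of radius `R`, representing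
`g x = ∫ a σ(wᵀx + b) dρ` for all `x ∈ Ω`. -/
def barronReps {d : ℕ} (σ : ℝ → ℝ) (Ω : Set (Rd d)) (R : ℝ) (g : Rd d → ℝ) :
    Set (Measure (ℝ × Rd d × ℝ)) :=
  {ρ | IsProbabilityMeasure ρ ∧ (∀ᵐ q ∂ρ, ‖q.2.1‖ ≤ R) ∧
    ∀ x ∈ Ω, g x = ∫ q, q.1 * σ (inner ℝ q.2.1 x + q.2.2) ∂ρ}

/-- The Barron norm `‖g‖_{B^1_R(Ω)} = inf_ρ ∫ |a| dρ`. -/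
def barronNorm {d : ℕ} (σ : ℝ → ℝ) (Ω : Set (Rd d)) (R : ℝ) (g : Rd d → ℝ) : ℝ≥0∞ :=
  ⨅ ρ ∈ barronReps σ Ω R g, ∫⁻ q, (‖q.1‖₊ : ℝ≥0∞) ∂ρ

/-- The Barron norm with index `p`: `‖g‖_{B^p_R(Ω)} = inf_ρ (∫ |a|^p dρ)^{1/p}`,
with the essential supremum for `p = ∞`. -/
def barronNormP {d : ℕ} (σ : ℝ → ℝ) (Ω : Set (Rd d)) (R : ℝ) (p : ℝ≥0∞)
    (g : Rd d → ℝ) : ℝ≥0∞ :=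
  ⨅ ρ ∈ barronReps σ Ω R g, eLpNorm (fun q => q.1) p ρ

def squash (K δ a : ℝ) : ℝ := K * a / (|a| + δ)

section Squash

variable {K δ : ℝ}

lemma squash_injective (hK : 0 < K) (hδ : 0 < δ) : Function.Injective (squash K δ) := by
  intro a b hab
  have ha : 0 < |a| + δ := by positivity
  have hb : 0 < |b| + δ := by positivity
  rw [squash, squash, div_eq_div_iff ha.ne' hb.ne', mul_assoc, mul_assoc,
    mul_right_inj' hK.ne'] at hab
  rcases abs_cases a with ⟨ha', _⟩ | ⟨ha', _⟩ <;> rcases abs_cases b with ⟨hb', _⟩ | ⟨hb', _⟩ <;>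
    rw [ha', hb'] at hab <;> nlinarith

lemma measurableEmbedding_squash (hK : 0 < K) (hδ : 0 < δ) : MeasurableEmbedding (squash K δ) :=
  Continuous.measurableEmbedding
    (continuous_const.mul continuous_id |>.div (continuous_abs.add continuous_const)
      fun a => by positivity)
    (squash_injective hK hδ)

lemma abs_squash_le (hK : 0 ≤ K) (hδ : 0 < δ) (a : ℝ) : |squash K δ a| ≤ K := by
  have ha : 0 < |a| + δ := by positivity
  rw [squash, abs_div, abs_mul, abs_of_nonneg hK, abs_of_pos ha, div_le_iff₀ ha]
  nlinarith [abs_nonneg a]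

lemma div_mul_squash (hK : K ≠ 0) (hδ : 0 < δ) (a : ℝ) : (|a| + δ) / K * squash K δ a = a := by
  have ha : 0 < |a| + δ := by positivity
  rw [squash]
  field_simp

end Squash

section AmplitudeReweight

variable {Y : Type*} [MeasurableSpace Y] (ρ : Measure (ℝ × Y)) (L δ : ℝ≥0)

/-- Since `squash` is injective, this is a pushforward along a measurable embedding, so
`integral_fst_mul_amplitudeReweight` holds for every `ψ`, also where the Bochner integrals
take the junk value `0`. -/
def amplitudeReweight : Measure (ℝ × Y) :=
  (ρ.withDensity fun q => ((‖q.1‖₊ + δ) / (L + δ) : ℝ≥0)).map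
    (Prod.map (squash (L + δ) δ) id)

variable {ρ L δ}

lemma measurableEmbedding_squash_prodMap (hδ : 0 < δ) :
    MeasurableEmbedding (Prod.map (squash (L + δ) δ) (id : Y → Y)) :=
  (measurableEmbedding_squash (by positivity) (NNReal.coe_pos.2 hδ)).prodMap
    MeasurableEmbedding.id

lemma isProbabilityMeasure_amplitudeReweight [IsProbabilityMeasure ρ]
    (hL : ∫⁻ q, ‖q.1‖ₑ ∂ρ = L) (hδ : 0 < δ) :
    IsProbabilityMeasure (amplitudeReweight ρ L δ) := by
  have hLδ : (L + δ : ℝ≥0∞) ≠ 0 := by positivity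
  constructor
  rw [amplitudeReweight, (measurableEmbedding_squash_prodMap hδ).map_apply,
    Set.preimage_univ, withDensity_apply _ MeasurableSet.univ, Measure.restrict_univ]
  calc ∫⁻ q, (((‖q.1‖₊ + δ) / (L + δ) : ℝ≥0) : ℝ≥0∞) ∂ρ
      = ∫⁻ q, (‖q.1‖ₑ + δ) * (L + δ : ℝ≥0∞)⁻¹ ∂ρ := by
        refine lintegral_congr fun q => ?_
        rw [ENNReal.coe_div (by positivity), ENNReal.div_eq_inv_mul, mul_comm]
        push_cast
        rfl
    _ = 1 := by
        rw [lintegral_mul_const' _ _ (ENNReal.inv_ne_top.2 hLδ),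
          lintegral_add_right _ measurable_const, hL, lintegral_const, measure_univ, mul_one,
          ENNReal.mul_inv_cancel hLδ (by simp)]

lemma ae_amplitudeReweight_of_ae_snd {P : Y → Prop} (hP : ∀ᵐ q ∂ρ, P q.2) (hδ : 0 < δ) :
    ∀ᵐ q ∂amplitudeReweight ρ L δ, P q.2 := by
  rw [amplitudeReweight, (measurableEmbedding_squash_prodMap hδ).ae_map_iff]
  exact (withDensity_absolutelyContinuous _ _).ae_le hP

lemma ae_abs_fst_le_amplitudeReweight (hδ : 0 < δ) :
    ∀ᵐ q ∂amplitudeReweight ρ L δ, |q.1| ≤ (L + δ : ℝ) := by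
  rw [amplitudeReweight, (measurableEmbedding_squash_prodMap hδ).ae_map_iff]
  exact Filter.Eventually.of_forall fun q =>
    abs_squash_le (by positivity) (NNReal.coe_pos.2 hδ) q.1

lemma integral_fst_mul_amplitudeReweight (hδ : 0 < δ) (ψ : Y → ℝ) :
    ∫ q, q.1 * ψ q.2 ∂amplitudeReweight ρ L δ = ∫ q, q.1 * ψ q.2 ∂ρ := by
  rw [amplitudeReweight, (measurableEmbedding_squash_prodMap hδ).integral_map,
    integral_withDensity_eq_integral_smul (by fun_prop)]
  refine integral_congr_ae (Filter.Eventually.of_forall fun q => ?_)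
  simp only [Prod.map_fst, Prod.map_snd, id_eq, NNReal.smul_def, smul_eq_mul]
  rw [← mul_assoc]
  push_cast
  rw [Real.norm_eq_abs, div_mul_squash (by positivity) (NNReal.coe_pos.2 hδ)]

end AmplitudeReweight

section Barron

variable {d : ℕ} {σ : ℝ → ℝ} {Ω : Set (Rd d)} {R : ℝ} {g : Rd d → ℝ}

lemma amplitudeReweight_mem_barronReps {ρ : Measure (ℝ × Rd d × ℝ)} {L δ : ℝ≥0}
    (hρ : ρ ∈ barronReps σ Ω R g) (hL : ∫⁻ q, ‖q.1‖ₑ ∂ρ = L) (hδ : 0 < δ) :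
    amplitudeReweight ρ L δ ∈ barronReps σ Ω R g := by
  obtain ⟨hprob, hball, hrep⟩ := hρ
  refine ⟨isProbabilityMeasure_amplitudeReweight hL hδ,
    ae_amplitudeReweight_of_ae_snd (P := fun y : Rd d × ℝ => ‖y.1‖ ≤ R) hball hδ, fun x hx => ?_⟩
  rw [hrep x hx]
  exact (integral_fst_mul_amplitudeReweight hδ fun y : Rd d × ℝ => σ (inner ℝ y.1 x + y.2)).symm

lemma barronNormP_top_le_eLpNorm_one {ρ : Measure (ℝ × Rd d × ℝ)}
    (hρ : ρ ∈ barronReps σ Ω R g) :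
    barronNormP σ Ω R ⊤ g ≤ eLpNorm (fun q => q.1) 1 ρ := by
  rw [eLpNorm_one_eq_lintegral_enorm]
  refine ENNReal.le_of_forall_pos_le_add fun δ hδ hfin => ?_
  set L := (∫⁻ q, ‖q.1‖ₑ ∂ρ).toNNReal
  have hL : ∫⁻ q, ‖q.1‖ₑ ∂ρ = L := (ENNReal.coe_toNNReal hfin.ne).symm
  calc barronNormP σ Ω R ⊤ g
      ≤ eLpNorm (fun q => q.1) ⊤ (amplitudeReweight ρ L δ) :=
        iInf₂_le _ (amplitudeReweight_mem_barronReps hρ hL hδ)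
    _ ≤ ENNReal.ofReal (L + δ) := by
        rw [eLpNorm_exponent_top]
        exact eLpNormEssSup_le_of_ae_bound (ae_abs_fst_le_amplitudeReweight hδ)
    _ = ∫⁻ q, ‖q.1‖ₑ ∂ρ + δ := by
        rw [hL, ← NNReal.coe_add, ENNReal.ofReal_coe_nnreal, ENNReal.coe_add]

lemma barronNormP_mono {p q : ℝ≥0∞} (hpq : p ≤ q) :
    barronNormP σ Ω R p g ≤ barronNormP σ Ω R q g :=
  le_iInf₂ fun ρ hρ => by
    have := hρ.1
    exact (iInf₂_le ρ hρ).trans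
      (eLpNorm_le_eLpNorm_of_exponent_le hpq measurable_fst.aestronglyMeasurable)

lemma barronNormP_top_eq_one : barronNormP σ Ω R ⊤ g = barronNormP σ Ω R 1 g :=
  le_antisymm (le_iInf₂ fun _ => barronNormP_top_le_eLpNorm_one) (barronNormP_mono le_top)

end Barron

theorem barron_norms_coincide_general {d : ℕ} (σ : ℝ → ℝ) (Ω : Set (Rd d)) (R : ℝ)
    (g : Rd d → ℝ) (p : ℝ≥0∞) (hp : 1 ≤ p) :
    barronNormP σ Ω R ⊤ g = barronNormP σ Ω R 1 g ∧
      barronNormP σ Ω R p g = barronNormP σ Ω R 1 g :=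
  ⟨barronNormP_top_eq_one, le_antisymm (barronNormP_top_eq_one ▸ barronNormP_mono le_top)
    (barronNormP_mono hp)⟩

/-- Proposition 1: for `g ∈ B^1_R(Ω)`, the Barron norms with index `p` coincide for all
`1 ≤ p ≤ ∞`: `‖g‖_{B^∞_R(Ω)} = ‖g‖_{B^p_R(Ω)} = ‖g‖_{B^1_R(Ω)}`. -/
theorem barron_norms_coincide {d : ℕ} (σ : ℝ → ℝ) (Ω : Set (Rd d)) (R : ℝ)
    (g : Rd d → ℝ) (hg : barronNormP σ Ω R 1 g < ⊤) (p : ℝ≥0∞) (hp : 1 ≤ p) :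
    barronNormP σ Ω R ⊤ g = barronNormP σ Ω R 1 g ∧
      barronNormP σ Ω R p g = barronNormP σ Ω R 1 g :=
  barron_norms_coincide_general σ Ω R g p hp
end
end

section
/- (Derivatives in Barron spaces) Suppose σ is smooth with bounded σ, σ', σ'' and that σ' ∈ B^1_{R_{d,1}}(ℝ) with norm ℓ_{d,1} and σ'' ∈ B^1_{R_{d,2}}(ℝ) with norm ℓ_{d,2}. If g ∈ B^1_R(ℝ^d) with R < ∞, then for any i, j ∈ {1,…,d}: ‖∂_i g‖_{B^1_{R_{d,1}R}(ℝ^d)} ≤ ℓ_{d,1} R ‖g‖_{B^1_R(ℝ^d)} and ‖∂_{ij} g‖_{B^1_{R_{d,2}R}(ℝ^d)} ≤ ℓ_{d,2} R² ‖g‖_{B^1_R(ℝ^d)}. -/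
set_option synthInstance.maxHeartbeats 1000000
set_option maxHeartbeats 1000000

open MeasureTheory Real
open scoped ENNReal NNReal RealInnerProductSpace

noncomputable section

/-- The `i`-th standard basis vector of `ℝ^d`. -/
def ee {d : ℕ} (i : Fin d) : Rd d := EuclideanSpace.single i (1 : ℝ)

/-! ### Auxiliary lemmas -/

lemma eps_mul {X c b : ℝ≥0∞} (hc : c ≠ ⊤) (hb : b ≠ ⊤)
    (h : ∀ ε : ℝ≥0∞, 0 < ε → ε ≠ ⊤ → X ≤ c * (b + ε)) : X ≤ c * b := by
  rcases eq_or_ne c 0 with rfl | hc0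
  · simpa using h 1 one_pos (by simp)
  refine ENNReal.le_of_forall_pos_le_add fun ε hε hlt => ?_
  have hδt : (↑ε / c : ℝ≥0∞) ≠ ⊤ := by
    simp [ENNReal.div_eq_top, hc0]
  have hδ0 : (0 : ℝ≥0∞) < ↑ε / c := ENNReal.div_pos (by exact_mod_cast hε.ne') hc
  calc X ≤ c * (b + ↑ε / c) := h _ hδ0 hδt
    _ = c * b + c * (↑ε / c) := by rw [mul_add]
    _ ≤ c * b + ↑ε := add_le_add_right ENNReal.mul_div_le _

lemma le_mul_biInf {M : Type*} {X c : ℝ≥0∞} {S : Set M} {f : M → ℝ≥0∞} {b : ℝ≥0∞}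
    (hb : b ≠ ⊤) (hinf : ⨅ m ∈ S, f m ≤ b) (hc : c ≠ ⊤)
    (h : ∀ m ∈ S, f m ≠ ⊤ → X ≤ c * f m) : X ≤ c * b := by
  refine eps_mul hc hb fun ε hε hεt => ?_
  have hlt : ⨅ m ∈ S, f m < b + ε :=
    lt_of_le_of_lt hinf (ENNReal.lt_add_right hb hε.ne')
  simp only [iInf_lt_iff] at hlt
  obtain ⟨m, hm, hlt⟩ := hlt
  have hbe : b + ε ≠ ⊤ := ENNReal.add_ne_top.2 ⟨hb, hεt⟩
  have hft : f m ≠ ⊤ := ne_top_of_lt (lt_of_lt_of_le hlt hbe.lt_top.le)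
  exact (h m hm hft).trans (mul_le_mul_right hlt.le c)

lemma abs_coord_le {d : ℕ} (ξ : Rd d) (k : Fin d) : |ξ k| ≤ ‖ξ‖ := by
  have h := abs_real_inner_le_norm (EuclideanSpace.single k (1 : ℝ)) ξ
  rw [EuclideanSpace.inner_single_left] at h
  simpa using h

lemma lint_mul_coord {d : ℕ} (ρ : Measure (ℝ × Rd d × ℝ)) {R : ℝ}
    (hw : ∀ᵐ q ∂ρ, ‖q.2.1‖ ≤ R) (c : ℝ × Rd d × ℝ → ℝ) (hc : Continuous c) (k : Fin d) :
    ∫⁻ q, (‖c q * q.2.1 k‖₊ : ℝ≥0∞) ∂ρ ≤ ENNReal.ofReal R * ∫⁻ q, (‖c q‖₊ : ℝ≥0∞) ∂ρ := by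
  rw [← lintegral_const_mul' _ _ (by simp)]
  refine lintegral_mono_ae (hw.mono fun q hq => ?_)
  have h1 : |q.2.1 k| ≤ R := (abs_coord_le _ _).trans hq
  rw [nnnorm_mul, ENNReal.coe_mul, ← enorm_eq_nnnorm, ← enorm_eq_nnnorm, Real.enorm_eq_ofReal_abs, Real.enorm_eq_ofReal_abs,
    mul_comm]
  exact mul_le_mul_left (ENNReal.ofReal_le_ofReal h1) _

section lemA
variable {d : ℕ} {ρ : Measure (ℝ × Rd d × ℝ)} [IsProbabilityMeasure ρ]
  {R : ℝ} {c : ℝ × Rd d × ℝ → ℝ} {τ : ℝ → ℝ} {C D : ℝ}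

omit [IsProbabilityMeasure ρ] in
lemma intc (hc : Continuous c) (hcA : ∫⁻ q, (‖c q‖₊ : ℝ≥0∞) ∂ρ ≠ ⊤) : Integrable c ρ :=
  ⟨hc.aestronglyMeasurable, hcA.lt_top⟩

/-- Differentiation under the integral sign for Barron-type representations. -/
lemma lemA (hw : ∀ᵐ q ∂ρ, ‖q.2.1‖ ≤ R) (hc : Continuous c)
    (hcA : ∫⁻ q, (‖c q‖₊ : ℝ≥0∞) ∂ρ ≠ ⊤) (hτ : ContDiff ℝ 1 τ)
    (hτC : ∀ y, |deriv τ y| ≤ C) (hτD : ∀ y, |τ y| ≤ D) (x : Rd d) :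
    HasFDerivAt (fun x : Rd d => ∫ q, c q * τ (⟪q.2.1, x⟫ + q.2.2) ∂ρ)
      (∫ q, (c q * deriv τ (⟪q.2.1, x⟫ + q.2.2)) • (innerSL ℝ q.2.1) ∂ρ) x := by
  have hτd : Differentiable ℝ τ := hτ.differentiable one_ne_zero
  have hτc : Continuous τ := hτ.continuous
  have hτ'c : Continuous (deriv τ) := hτ.continuous_deriv le_rfl
  set F : Rd d → (ℝ × Rd d × ℝ) → ℝ :=
    fun x q => c q * τ (⟪q.2.1, x⟫ + q.2.2) with hF
  set F' : Rd d → (ℝ × Rd d × ℝ) → (Rd d →L[ℝ] ℝ) :=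
    fun x q => (c q * deriv τ (⟪q.2.1, x⟫ + q.2.2)) • (innerSL ℝ q.2.1) with hF'
  have hFc : ∀ y : Rd d, Continuous (F y) := fun y =>
    hc.mul (hτc.comp ((continuous_fst.comp continuous_snd).inner continuous_const |>.add
      (continuous_snd.comp continuous_snd)))
  have hF'c : ∀ y : Rd d, Continuous (F' y) := by
    intro y
    refine Continuous.smul (f := fun q => c q * deriv τ (⟪q.2.1, y⟫ + q.2.2))
      (g := fun q => innerSL ℝ q.2.1) ?_ ?_
    · exact hc.mul (hτ'c.comp ((continuous_fst.comp continuous_snd).inner continuous_const |>.add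
        (continuous_snd.comp continuous_snd)))
    · exact (innerSL ℝ).continuous.comp (continuous_fst.comp continuous_snd)
  have hci : Integrable c ρ := intc hc hcA
  refine hasFDerivAt_integral_of_dominated_of_fderiv_le (F := F) (F' := F')
    (bound := fun q => ‖c q‖ * (C * R)) (Metric.ball_mem_nhds x one_pos) ?_ ?_ ?_ ?_ ?_ ?_
  · exact Filter.Eventually.of_forall fun y => (hFc y).aestronglyMeasurable
  · refine (hci.norm.mul_const D).mono' (hFc x).aestronglyMeasurable ?_
    refine Filter.Eventually.of_forall fun q => ?_
    rw [hF, Real.norm_eq_abs, abs_mul]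
    exact mul_le_mul_of_nonneg_left (hτD _) (abs_nonneg _) |>.trans
      (by rw [Real.norm_eq_abs])
  · exact (hF'c x).aestronglyMeasurable
  · refine hw.mono fun q hq y _ => ?_
    rw [hF']
    calc ‖(c q * deriv τ (⟪q.2.1, y⟫ + q.2.2)) • (innerSL ℝ q.2.1)‖
        ≤ |c q| * |deriv τ (⟪q.2.1, y⟫ + q.2.2)| * ‖q.2.1‖ := by
          simpa [Real.norm_eq_abs] using
            ContinuousLinearMap.opNorm_smul_le (c q * deriv τ (⟪q.2.1, y⟫ + q.2.2))
              (innerSL ℝ q.2.1)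
      _ ≤ (|c q| * C) * ‖q.2.1‖ :=
          mul_le_mul_of_nonneg_right
            (mul_le_mul_of_nonneg_left (hτC _) (abs_nonneg _)) (norm_nonneg _)
      _ ≤ (|c q| * C) * R := by
          refine mul_le_mul_of_nonneg_left hq ?_
          exact mul_nonneg (abs_nonneg _) ((abs_nonneg _).trans (hτC 0))
      _ = ‖c q‖ * (C * R) := by rw [Real.norm_eq_abs, mul_assoc]
  · exact hci.norm.mul_const _
  · refine Filter.Eventually.of_forall fun q y _ => ?_
    have h1 : HasFDerivAt (fun y : Rd d => ⟪q.2.1, y⟫ + q.2.2) (innerSL ℝ q.2.1) y :=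
      ((innerSL ℝ q.2.1).hasFDerivAt).add_const _
    have h2 : HasDerivAt τ (deriv τ (⟪q.2.1, y⟫ + q.2.2)) (⟪q.2.1, y⟫ + q.2.2) :=
      (hτd _).hasDerivAt
    have h3 := (h2.comp_hasFDerivAt y h1).const_mul (c q)
    refine h3.congr_fderiv ?_
    rw [hF', smul_smul]

/-- Value of the partial derivative of a Barron-type integral. -/
lemma lemA' (hw : ∀ᵐ q ∂ρ, ‖q.2.1‖ ≤ R) (hc : Continuous c)
    (hcA : ∫⁻ q, (‖c q‖₊ : ℝ≥0∞) ∂ρ ≠ ⊤) (hτ : ContDiff ℝ 1 τ)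
    (hτC : ∀ y, |deriv τ y| ≤ C) (hτD : ∀ y, |τ y| ≤ D) (x : Rd d) (i : Fin d) :
    fderiv ℝ (fun x : Rd d => ∫ q, c q * τ (⟪q.2.1, x⟫ + q.2.2) ∂ρ) x (ee i)
      = ∫ q, (c q * q.2.1 i) * deriv τ (⟪q.2.1, x⟫ + q.2.2) ∂ρ := by
  have hτ'c : Continuous (deriv τ) := hτ.continuous_deriv le_rfl
  have hd := lemA hw hc hcA hτ hτC hτD x
  rw [hd.fderiv]
  have hint : Integrable
      (fun q : ℝ × Rd d × ℝ => (c q * deriv τ (⟪q.2.1, x⟫ + q.2.2)) • (innerSL ℝ q.2.1)) ρ := by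
    have hcont : Continuous fun q : ℝ × Rd d × ℝ =>
        (c q * deriv τ (⟪q.2.1, x⟫ + q.2.2)) • (innerSL ℝ q.2.1) := by
      refine Continuous.smul (f := fun q => c q * deriv τ (⟪q.2.1, x⟫ + q.2.2))
        (g := fun q => innerSL ℝ q.2.1) ?_ ?_
      · exact hc.mul (hτ'c.comp ((continuous_fst.comp continuous_snd).inner continuous_const
          |>.add (continuous_snd.comp continuous_snd)))
      · exact (innerSL ℝ).continuous.comp (continuous_fst.comp continuous_snd)
    refine ((intc hc hcA).norm.mul_const (C * R)).mono' hcont.aestronglyMeasurable ?_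
    refine hw.mono fun q hq => ?_
    calc ‖(c q * deriv τ (⟪q.2.1, x⟫ + q.2.2)) • (innerSL ℝ q.2.1)‖
        ≤ |c q| * |deriv τ (⟪q.2.1, x⟫ + q.2.2)| * ‖q.2.1‖ := by
          simpa [Real.norm_eq_abs] using
            ContinuousLinearMap.opNorm_smul_le (c q * deriv τ (⟪q.2.1, x⟫ + q.2.2))
              (innerSL ℝ q.2.1)
      _ ≤ (|c q| * C) * ‖q.2.1‖ :=
          mul_le_mul_of_nonneg_right
            (mul_le_mul_of_nonneg_left (hτC _) (abs_nonneg _)) (norm_nonneg _)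
      _ ≤ (|c q| * C) * R := mul_le_mul_of_nonneg_left hq
            (mul_nonneg (abs_nonneg _) ((abs_nonneg _).trans (hτC 0)))
      _ = ‖c q‖ * (C * R) := by rw [Real.norm_eq_abs, mul_assoc]
  rw [ContinuousLinearMap.integral_apply hint (ee i)]
  refine integral_congr_ae (Filter.Eventually.of_forall fun q => ?_)
  have : (innerSL ℝ q.2.1) (ee i) = q.2.1 i := by
    simp [ee, EuclideanSpace.inner_single_right]
  simp only [ContinuousLinearMap.smul_apply, this, smul_eq_mul]
  ring

end lemA

/-- Composition of a representing measure for `φ` with a representing measure for the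
activation `τ` in terms of `σ`. -/
lemma lemB {d : ℕ} {σ τ : ℝ → ℝ} {C₀ : ℝ} (hσb : ∀ y, |σ y| ≤ C₀) (hσc : Continuous σ)
    {ρ : Measure (ℝ × Rd d × ℝ)} [IsProbabilityMeasure ρ]
    {R' : ℝ} (hw : ∀ᵐ q ∂ρ, ‖q.2.1‖ ≤ R')
    {c : ℝ × Rd d × ℝ → ℝ} (hc : Continuous c) (hcA : ∫⁻ q, (‖c q‖₊ : ℝ≥0∞) ∂ρ ≠ ⊤)
    {μ : Measure (ℝ × Rd 1 × ℝ)} [IsProbabilityMeasure μ]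
    {S : ℝ} (hξ : ∀ᵐ p ∂μ, ‖p.2.1‖ ≤ S) (hγ : ∫⁻ p, (‖p.1‖₊ : ℝ≥0∞) ∂μ ≠ ⊤)
    (hrep : ∀ s : ℝ, τ s = ∫ p, p.1 * σ (p.2.1 0 * s + p.2.2) ∂μ)
    {φ : Rd d → ℝ} (hφ : ∀ x, φ x = ∫ q, c q * τ (⟪q.2.1, x⟫ + q.2.2) ∂ρ) :
    barronNorm σ Set.univ (S * R') φ ≤
      (∫⁻ q, (‖c q‖₊ : ℝ≥0∞) ∂ρ) * ∫⁻ p, (‖p.1‖₊ : ℝ≥0∞) ∂μ := by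
  have hC₀ : 0 ≤ C₀ := (abs_nonneg _).trans (hσb 0)
  set T : (ℝ × Rd d × ℝ) × (ℝ × Rd 1 × ℝ) → ℝ × Rd d × ℝ :=
    fun z => (c z.1 * z.2.1, z.2.2.1 0 • z.1.2.1, z.2.2.1 0 * z.1.2.2 + z.2.2.2) with hT
  have hproj : Continuous fun z : (ℝ × Rd d × ℝ) × (ℝ × Rd 1 × ℝ) => z.2.2.1 0 :=
    (EuclideanSpace.proj (0 : Fin 1)).continuous.comp
      (continuous_fst.comp (continuous_snd.comp continuous_snd))
  have hTc : Continuous T := by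
    refine Continuous.prodMk ?_ (Continuous.prodMk ?_ ?_)
    · exact (hc.comp continuous_fst).mul (continuous_fst.comp continuous_snd)
    · exact hproj.smul (continuous_fst.comp (continuous_snd.comp continuous_fst))
    · exact (hproj.mul (continuous_snd.comp (continuous_snd.comp continuous_fst))).add
        (continuous_snd.comp (continuous_snd.comp continuous_snd))
  set ν : Measure (ℝ × Rd d × ℝ) := (ρ.prod μ).map T with hν
  have hprob : IsProbabilityMeasure ν := Measure.isProbabilityMeasure_map hTc.measurable.aemeasurable
  have hradset : MeasurableSet {q : ℝ × Rd d × ℝ | ‖q.2.1‖ ≤ S * R'} :=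
    (isClosed_le (continuous_norm.comp (continuous_fst.comp continuous_snd))
      continuous_const).measurableSet
  have hrad : ∀ᵐ q ∂ν, ‖q.2.1‖ ≤ S * R' := by
    rw [hν, (ae_map_iff hTc.measurable.aemeasurable hradset)]
    have h2 : ∀ᵐ z ∂ρ.prod μ, ‖z.1.2.1‖ ≤ R' ∧ ‖z.2.2.1‖ ≤ S := by
      rw [Measure.ae_prod_iff_ae_ae]
      · exact hw.mono fun q hq => hξ.mono fun p hp => ⟨hq, hp⟩
      · have : {z : (ℝ × Rd d × ℝ) × (ℝ × Rd 1 × ℝ) | ‖z.1.2.1‖ ≤ R' ∧ ‖z.2.2.1‖ ≤ S}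
            = {q : ℝ × Rd d × ℝ | ‖q.2.1‖ ≤ R'} ×ˢ {p : ℝ × Rd 1 × ℝ | ‖p.2.1‖ ≤ S} := rfl
        rw [this]
        refine MeasurableSet.prod ?_ ?_
        · exact (isClosed_le (continuous_norm.comp
            (continuous_fst.comp continuous_snd)) continuous_const).measurableSet
        · exact (isClosed_le (continuous_norm.comp
            (continuous_fst.comp continuous_snd)) continuous_const).measurableSet
    refine h2.mono fun z hz => ?_
    have h0 : |z.2.2.1 0| ≤ S := (abs_coord_le _ _).trans hz.2
    calc ‖z.2.2.1 0 • z.1.2.1‖ = |z.2.2.1 0| * ‖z.1.2.1‖ := by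
          rw [norm_smul, Real.norm_eq_abs]
      _ ≤ S * R' := mul_le_mul h0 hz.1 (norm_nonneg _) ((abs_nonneg _).trans h0)
  have hic : Integrable c ρ := ⟨hc.aestronglyMeasurable, hcA.lt_top⟩
  have hiγ : Integrable (fun p : ℝ × Rd 1 × ℝ => p.1) μ :=
    ⟨(continuous_fst).aestronglyMeasurable, hγ.lt_top⟩
  have key : ∀ x : Rd d, Integrable (fun z : (ℝ × Rd d × ℝ) × (ℝ × Rd 1 × ℝ) =>
      (c z.1 * z.2.1) * σ (⟪z.2.2.1 0 • z.1.2.1, x⟫ + (z.2.2.1 0 * z.1.2.2 + z.2.2.2)))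
      (ρ.prod μ) := by
    intro x
    have hdom : Integrable (fun z : (ℝ × Rd d × ℝ) × (ℝ × Rd 1 × ℝ) =>
        ‖c z.1‖ * (‖z.2.1‖ * C₀)) (ρ.prod μ) :=
      hic.norm.mul_prod (hiγ.norm.mul_const C₀)
    have hcont : Continuous (fun z : (ℝ × Rd d × ℝ) × (ℝ × Rd 1 × ℝ) =>
        (c z.1 * z.2.1) * σ (⟪z.2.2.1 0 • z.1.2.1, x⟫ + (z.2.2.1 0 * z.1.2.2 + z.2.2.2))) := by
      refine Continuous.mul ((hc.comp continuous_fst).mul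
        (continuous_fst.comp continuous_snd)) (hσc.comp ?_)
      refine Continuous.add ?_ ?_
      · exact (hproj.smul
          (continuous_fst.comp (continuous_snd.comp continuous_fst))).inner continuous_const
      · exact (hproj.mul (continuous_snd.comp (continuous_snd.comp continuous_fst))).add
          (continuous_snd.comp (continuous_snd.comp continuous_snd))
    refine hdom.mono' hcont.aestronglyMeasurable (Filter.Eventually.of_forall fun z => ?_)
    rw [Real.norm_eq_abs, abs_mul, abs_mul]
    calc |c z.1| * |z.2.1| * |σ _|
        ≤ |c z.1| * |z.2.1| * C₀ := by
          exact mul_le_mul_of_nonneg_left (hσb _) (mul_nonneg (abs_nonneg _) (abs_nonneg _))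
      _ = ‖c z.1‖ * (‖z.2.1‖ * C₀) := by
          rw [Real.norm_eq_abs, Real.norm_eq_abs]; ring
  have hmem : ν ∈ barronReps σ Set.univ (S * R') φ := by
    refine ⟨hprob, hrad, fun x _ => ?_⟩
    have hmeas : AEStronglyMeasurable
        (fun q : ℝ × Rd d × ℝ => q.1 * σ ((⟪q.2.1, x⟫ : ℝ) + q.2.2)) ν := by
      refine Continuous.aestronglyMeasurable ?_
      exact continuous_fst.mul (hσc.comp (((continuous_fst.comp continuous_snd).inner
        continuous_const).add (continuous_snd.comp continuous_snd)))
    rw [hν, integral_map hTc.measurable.aemeasurable hmeas]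
    have hre : ∀ z : (ℝ × Rd d × ℝ) × (ℝ × Rd 1 × ℝ),
        (T z).1 * σ ((⟪(T z).2.1, x⟫ : ℝ) + (T z).2.2)
          = (c z.1 * z.2.1) * σ (⟪z.2.2.1 0 • z.1.2.1, x⟫ + (z.2.2.1 0 * z.1.2.2 + z.2.2.2)) := by
      intro z; rfl
    rw [show (fun z => (T z).1 * σ ((⟪(T z).2.1, x⟫ : ℝ) + (T z).2.2)) = fun z =>
      (c z.1 * z.2.1) * σ (⟪z.2.2.1 0 • z.1.2.1, x⟫ + (z.2.2.1 0 * z.1.2.2 + z.2.2.2)) from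
        funext hre]
    rw [integral_prod _ (key x), hφ x]
    refine integral_congr_ae (Filter.Eventually.of_forall fun q => ?_)
    have : ∀ p : ℝ × Rd 1 × ℝ,
        (c q * p.1) * σ (⟪p.2.1 0 • q.2.1, x⟫ + (p.2.1 0 * q.2.2 + p.2.2))
          = c q * (p.1 * σ (p.2.1 0 * (⟪q.2.1, x⟫ + q.2.2) + p.2.2)) := by
      intro p
      rw [real_inner_smul_left]
      ring_nf
    simp_rw [this]
    rw [integral_const_mul, ← hrep (⟪q.2.1, x⟫ + q.2.2)]
  have hlint : ∫⁻ q, (‖q.1‖₊ : ℝ≥0∞) ∂ν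
      = (∫⁻ q, (‖c q‖₊ : ℝ≥0∞) ∂ρ) * ∫⁻ p, (‖p.1‖₊ : ℝ≥0∞) ∂μ := by
    rw [hν, lintegral_map (by fun_prop) hTc.measurable]
    have : ∀ z : (ℝ × Rd d × ℝ) × (ℝ × Rd 1 × ℝ),
        ((‖(T z).1‖₊ : ℝ≥0∞)) = (‖c z.1‖₊ : ℝ≥0∞) * (‖z.2.1‖₊ : ℝ≥0∞) := by
      intro z
      rw [hT]
      simp [nnnorm_mul]
    simp_rw [this]
    exact lintegral_prod_mul (hc.measurable.nnnorm.coe_nnreal_ennreal).aemeasurable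
      (measurable_fst.nnnorm.coe_nnreal_ennreal).aemeasurable
  calc barronNorm σ Set.univ (S * R') φ ≤ ∫⁻ q, (‖q.1‖₊ : ℝ≥0∞) ∂ν := iInf₂_le ν hmem
    _ = _ := hlint

/-- Lemma (derivatives in Barron spaces): suppose `σ` is smooth with bounded `σ, σ', σ''`,
`σ' ∈ B^1_{R_{d,1}}(ℝ)` with norm at most `ℓ_{d,1}` and `σ'' ∈ B^1_{R_{d,2}}(ℝ)` with norm
at most `ℓ_{d,2}`. If `g ∈ B^1_R(ℝ^d)`, then for all `i, j`:
`‖∂ᵢg‖_{B^1_{R_{d,1}R}} ≤ ℓ_{d,1} R ‖g‖_{B^1_R}` and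
`‖∂ᵢⱼg‖_{B^1_{R_{d,2}R}} ≤ ℓ_{d,2} R² ‖g‖_{B^1_R}`. -/
theorem barron_deriv {d : ℕ} (σ : ℝ → ℝ) (hσ : ContDiff ℝ (⊤ : ℕ∞) σ)
    (C₀ C₁ C₂ : ℝ) (hC₀ : ∀ y, |σ y| ≤ C₀) (hC₁ : ∀ y, |deriv σ y| ≤ C₁)
    (hC₂ : ∀ y, |deriv (deriv σ) y| ≤ C₂)
    (Rd1 Rd2 ld1 ld2 : ℝ) (hld1 : 0 ≤ ld1) (hld2 : 0 ≤ ld2)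
    (hd1 : barronNorm (d := 1) σ Set.univ Rd1 (fun y => deriv σ (y 0)) ≤ ENNReal.ofReal ld1)
    (hd2 : barronNorm (d := 1) σ Set.univ Rd2 (fun y => deriv (deriv σ) (y 0)) ≤
      ENNReal.ofReal ld2)
    (R : ℝ) (hR : 0 ≤ R) (g : Rd d → ℝ) (hg : barronNorm σ Set.univ R g < ⊤)
    (i j : Fin d) :
    barronNorm σ Set.univ (Rd1 * R) (fun x => fderiv ℝ g x (ee i)) ≤
        ENNReal.ofReal (ld1 * R) * barronNorm σ Set.univ R g ∧
      barronNorm σ Set.univ (Rd2 * R)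
          (fun x => fderiv ℝ (fun y => fderiv ℝ g y (ee j)) x (ee i)) ≤
        ENNReal.ofReal (ld2 * R ^ 2) * barronNorm σ Set.univ R g := by
  have hσ1 : ContDiff ℝ 1 σ := hσ.of_le (by simp)
  have hσ'1 : ContDiff ℝ 1 (deriv σ) :=
    ((contDiff_infty_iff_deriv.1 (hσ.of_le (by simp))).2).of_le (by exact_mod_cast le_top)
  -- extract a representation of `deriv σ` and `deriv (deriv σ)` from the `d = 1` reps
  have hrep1 : ∀ (τ : ℝ → ℝ) (Rτ : ℝ) (μ : Measure (ℝ × Rd 1 × ℝ)),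
      μ ∈ barronReps (d := 1) σ Set.univ Rτ (fun y => τ (y 0)) →
      ∀ s : ℝ, τ s = ∫ p, p.1 * σ (p.2.1 0 * s + p.2.2) ∂μ := by
    intro τ Rτ μ hμ s
    have h := hμ.2.2 (EuclideanSpace.single 0 s) (Set.mem_univ _)
    simp only at h
    have hs : (EuclideanSpace.single (0 : Fin 1) s) 0 = s := by simp
    rw [hs] at h
    rw [h]
    refine integral_congr_ae (Filter.Eventually.of_forall fun p => ?_)
    show p.1 * σ ((inner ℝ p.2.1 (EuclideanSpace.single 0 s) : ℝ) + p.2.2)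
      = p.1 * σ (p.2.1 0 * s + p.2.2)
    rw [EuclideanSpace.inner_single_right]
    simp [mul_comm]
  constructor
  · -- first derivative
    refine le_mul_biInf (S := barronReps σ Set.univ R g)
      (f := fun ρ => ∫⁻ q, (‖q.1‖₊ : ℝ≥0∞) ∂ρ) hg.ne le_rfl ENNReal.ofReal_ne_top ?_
    intro ρ hρ hAρ
    haveI := hρ.1
    have hw := hρ.2.1
    have hgfun : g = fun x => ∫ q, q.1 * σ ((⟪q.2.1, x⟫ : ℝ) + q.2.2) ∂ρ :=
      funext fun x => hρ.2.2 x (Set.mem_univ _)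
    have hderiv : ∀ x, fderiv ℝ g x (ee i)
        = ∫ q, (q.1 * q.2.1 i) * deriv σ ((⟪q.2.1, x⟫ : ℝ) + q.2.2) ∂ρ := by
      intro x
      rw [hgfun]
      exact lemA' (c := fun q => q.1) hw continuous_fst hAρ hσ1 hC₁ hC₀ x i
    have hci : Continuous fun q : ℝ × Rd d × ℝ => q.1 * q.2.1 i :=
      continuous_fst.mul ((EuclideanSpace.proj i).continuous.comp
        (continuous_fst.comp continuous_snd))
    have hlci : ∫⁻ q, (‖q.1 * q.2.1 i‖₊ : ℝ≥0∞) ∂ρ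
        ≤ ENNReal.ofReal R * ∫⁻ q, (‖q.1‖₊ : ℝ≥0∞) ∂ρ :=
      lint_mul_coord ρ hw _ continuous_fst i
    have hcAi : ∫⁻ q, (‖q.1 * q.2.1 i‖₊ : ℝ≥0∞) ∂ρ ≠ ⊤ :=
      ne_top_of_le_ne_top (ENNReal.mul_ne_top ENNReal.ofReal_ne_top hAρ) hlci
    calc barronNorm σ Set.univ (Rd1 * R) (fun x => fderiv ℝ g x (ee i))
        ≤ (ENNReal.ofReal R * ∫⁻ q, (‖q.1‖₊ : ℝ≥0∞) ∂ρ) * ENNReal.ofReal ld1 := by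
          refine le_mul_biInf (S := barronReps (d := 1) σ Set.univ Rd1 (fun y => deriv σ (y 0)))
            (f := fun μ => ∫⁻ p, (‖p.1‖₊ : ℝ≥0∞) ∂μ) ENNReal.ofReal_ne_top hd1
            (ENNReal.mul_ne_top ENNReal.ofReal_ne_top hAρ) ?_
          intro μ hμ hIμ
          haveI := hμ.1
          calc barronNorm σ Set.univ (Rd1 * R) (fun x => fderiv ℝ g x (ee i))
              ≤ (∫⁻ q, (‖q.1 * q.2.1 i‖₊ : ℝ≥0∞) ∂ρ) * ∫⁻ p, (‖p.1‖₊ : ℝ≥0∞) ∂μ :=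
                lemB hC₀ hσ1.continuous hw hci hcAi hμ.2.1 hIμ
                  (hrep1 (deriv σ) Rd1 μ hμ) hderiv
            _ ≤ (ENNReal.ofReal R * ∫⁻ q, (‖q.1‖₊ : ℝ≥0∞) ∂ρ) * ∫⁻ p, (‖p.1‖₊ : ℝ≥0∞) ∂μ :=
                mul_le_mul_left hlci _
      _ = ENNReal.ofReal (ld1 * R) * ∫⁻ q, (‖q.1‖₊ : ℝ≥0∞) ∂ρ := by
          rw [ENNReal.ofReal_mul hld1]; ring
  · -- second derivative
    refine le_mul_biInf (S := barronReps σ Set.univ R g)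
      (f := fun ρ => ∫⁻ q, (‖q.1‖₊ : ℝ≥0∞) ∂ρ) hg.ne le_rfl ENNReal.ofReal_ne_top ?_
    intro ρ hρ hAρ
    haveI := hρ.1
    have hw := hρ.2.1
    have hgfun : g = fun x => ∫ q, q.1 * σ ((⟪q.2.1, x⟫ : ℝ) + q.2.2) ∂ρ :=
      funext fun x => hρ.2.2 x (Set.mem_univ _)
    have hcj : Continuous fun q : ℝ × Rd d × ℝ => q.1 * q.2.1 j :=
      continuous_fst.mul ((EuclideanSpace.proj j).continuous.comp
        (continuous_fst.comp continuous_snd))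
    have hlcj : ∫⁻ q, (‖q.1 * q.2.1 j‖₊ : ℝ≥0∞) ∂ρ
        ≤ ENNReal.ofReal R * ∫⁻ q, (‖q.1‖₊ : ℝ≥0∞) ∂ρ :=
      lint_mul_coord ρ hw _ continuous_fst j
    have hcAj : ∫⁻ q, (‖q.1 * q.2.1 j‖₊ : ℝ≥0∞) ∂ρ ≠ ⊤ :=
      ne_top_of_le_ne_top (ENNReal.mul_ne_top ENNReal.ofReal_ne_top hAρ) hlcj
    have hGj : (fun x => fderiv ℝ g x (ee j))
        = fun x => ∫ q, (q.1 * q.2.1 j) * deriv σ ((⟪q.2.1, x⟫ : ℝ) + q.2.2) ∂ρ := by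
      funext x
      rw [hgfun]
      exact lemA' (c := fun q => q.1) hw continuous_fst hAρ hσ1 hC₁ hC₀ x j
    have hderiv2 : ∀ x, fderiv ℝ (fun y => fderiv ℝ g y (ee j)) x (ee i)
        = ∫ q, ((q.1 * q.2.1 j) * q.2.1 i) * deriv (deriv σ) ((⟪q.2.1, x⟫ : ℝ) + q.2.2) ∂ρ := by
      intro x
      rw [hGj]
      exact lemA' (c := fun q => q.1 * q.2.1 j) hw hcj hcAj hσ'1 hC₂ hC₁ x i
    have hcji : Continuous fun q : ℝ × Rd d × ℝ => (q.1 * q.2.1 j) * q.2.1 i :=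
      hcj.mul ((EuclideanSpace.proj i).continuous.comp
        (continuous_fst.comp continuous_snd))
    have hlcji : ∫⁻ q, (‖(q.1 * q.2.1 j) * q.2.1 i‖₊ : ℝ≥0∞) ∂ρ
        ≤ ENNReal.ofReal R * (ENNReal.ofReal R * ∫⁻ q, (‖q.1‖₊ : ℝ≥0∞) ∂ρ) :=
      (lint_mul_coord ρ hw _ hcj i).trans (mul_le_mul_right hlcj _)
    have hcAji : ∫⁻ q, (‖(q.1 * q.2.1 j) * q.2.1 i‖₊ : ℝ≥0∞) ∂ρ ≠ ⊤ :=
      ne_top_of_le_ne_top (ENNReal.mul_ne_top ENNReal.ofReal_ne_top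
        (ENNReal.mul_ne_top ENNReal.ofReal_ne_top hAρ)) hlcji
    calc barronNorm σ Set.univ (Rd2 * R)
          (fun x => fderiv ℝ (fun y => fderiv ℝ g y (ee j)) x (ee i))
        ≤ (ENNReal.ofReal R * (ENNReal.ofReal R * ∫⁻ q, (‖q.1‖₊ : ℝ≥0∞) ∂ρ))
            * ENNReal.ofReal ld2 := by
          refine le_mul_biInf
            (S := barronReps (d := 1) σ Set.univ Rd2 (fun y => deriv (deriv σ) (y 0)))
            (f := fun μ => ∫⁻ p, (‖p.1‖₊ : ℝ≥0∞) ∂μ) ENNReal.ofReal_ne_top hd2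
            (ENNReal.mul_ne_top ENNReal.ofReal_ne_top
              (ENNReal.mul_ne_top ENNReal.ofReal_ne_top hAρ)) ?_
          intro μ hμ hIμ
          haveI := hμ.1
          calc barronNorm σ Set.univ (Rd2 * R)
                (fun x => fderiv ℝ (fun y => fderiv ℝ g y (ee j)) x (ee i))
              ≤ (∫⁻ q, (‖(q.1 * q.2.1 j) * q.2.1 i‖₊ : ℝ≥0∞) ∂ρ)
                  * ∫⁻ p, (‖p.1‖₊ : ℝ≥0∞) ∂μ :=
                lemB hC₀ hσ1.continuous hw hcji hcAji hμ.2.1 hIμ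
                  (hrep1 (deriv (deriv σ)) Rd2 μ hμ) hderiv2
            _ ≤ (ENNReal.ofReal R * (ENNReal.ofReal R * ∫⁻ q, (‖q.1‖₊ : ℝ≥0∞) ∂ρ))
                  * ∫⁻ p, (‖p.1‖₊ : ℝ≥0∞) ∂μ := mul_le_mul_left hlcji _
      _ = ENNReal.ofReal (ld2 * R ^ 2) * ∫⁻ q, (‖q.1‖₊ : ℝ≥0∞) ∂ρ := by
          rw [ENNReal.ofReal_mul hld2, sq, ENNReal.ofReal_mul hR]; ring
end
end

section
/- Let f₀ ∈ L²(ℝ^d) ∩ L¹(ℝ^d) be a compactly supported complex-valued function. Then f = Re(F^{-1}f₀) belongs to L²(ℝ^d) ∩ B^1_{R_f}(ℝ^d) with activation σ = cos, for some 0 < R_f < ∞; in fact if f₀ is supported in the ball of radius R_f then ‖f‖_{B^1_{R_f}(ℝ^d)} ≤ (2π)^{-d/2} ‖f₀‖_{L¹(ℝ^d)}. -/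
open MeasureTheory Real
open scoped ENNReal NNReal

noncomputable section

/-- The Fourier transform with the normalization `(2π)^{-d/2} ∫ e^{-i x·ξ} f(x) dx`. -/
def FT {d : ℕ} (f : Rd d → ℂ) (ξ : Rd d) : ℂ :=
  ((2 * π) ^ (-(d : ℝ) / 2) : ℝ) • ∫ x : Rd d, Complex.exp (-((inner ℝ x ξ : ℝ) : ℂ) * Complex.I) * f x

/-- The inverse Fourier transform `(2π)^{-d/2} ∫ e^{i x·ξ} f(ξ) dξ`. -/
def FTinv {d : ℕ} (f : Rd d → ℂ) (x : Rd d) : ℂ :=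
  ((2 * π) ^ (-(d : ℝ) / 2) : ℝ) • ∫ ξ : Rd d, Complex.exp (((inner ℝ x ξ : ℝ) : ℂ) * Complex.I) * f ξ

/-!
By Plancherel, `F⁻¹f₀` is square integrable: for `f₀ ∈ L¹ ∩ L²` the inverse Fourier integral
agrees almost everywhere with the `L²` inverse Fourier transform, because both pair in the same
way with every test function. Writing `e^{i x·ξ} f₀(ξ) = |f₀(ξ)| e^{i (x·ξ + arg f₀(ξ))}`,
the real part `Re F⁻¹f₀` is a superposition of the cosine neurons `cos (ξ·x + arg f₀(ξ))`,
`ξ` in the ball of radius `R_f`, with outer weights `(2π)^{-d/2} |f₀(ξ)|`. Normalising Lebesgue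
measure on the ball to a probability measure, and multiplying the outer weights by the volume of
the ball to compensate, gives a representing measure of cost `(2π)^{-d/2} ‖f₀‖_{L¹}`.
-/

open scoped FourierTransform

namespace Real

variable {V : Type*} [NormedAddCommGroup V] [InnerProductSpace ℝ V] [FiniteDimensional ℝ V]
  [MeasurableSpace V] [BorelSpace V]

theorem continuous_fourierInv_of_integrable {F : Type*} [NormedAddCommGroup F] [NormedSpace ℂ F]
    [CompleteSpace F] {f : V → F} (hf : Integrable f) : Continuous (𝓕⁻ f) := by
  rw [← Lp.fourierTransformInv_toLp (memLp_one_iff_integrable.2 hf)]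
  exact BoundedContinuousFunction.continuous _

theorem integral_fourierInv_smul_eq {F : Type*} [NormedAddCommGroup F] [NormedSpace ℂ F]
    [CompleteSpace F] {φ : V → ℂ} {f : V → F} (hφ : Integrable φ) (hf : Integrable f) :
    ∫ ξ, 𝓕⁻ φ ξ • f ξ = ∫ x, φ x • 𝓕⁻ f x := by
  have hflip : (-innerₗ V).flip = -innerₗ V := by
    ext x y
    simp [real_inner_comm]
  have := VectorFourier.integral_fourierIntegral_smul_eq_flip (e := 𝐞) (μ := volume)
    (ν := volume) (L := -innerₗ V) continuous_fourierChar
    (by simp only [LinearMap.neg_apply, innerₗ_apply_apply]; fun_prop) hφ hf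
  rwa [hflip] at this

theorem fourierInv_ae_eq_fourierInv_toLp {F : Type*} [NormedAddCommGroup F]
    [InnerProductSpace ℂ F] [CompleteSpace F] {f : V → F} (hf : Integrable f) (hf₂ : MemLp f 2) :
    𝓕⁻ f =ᵐ[volume] ((𝓕⁻ (hf₂.toLp f) : Lp F 2) : V → F) := by
  refine ae_eq_of_integral_contDiff_smul_eq
    (continuous_fourierInv_of_integrable hf).locallyIntegrable
    ((Lp.memLp _).locallyIntegrable one_le_two) fun g hg_smooth hg_supp => ?_
  set φ : SchwartzMap V ℂ := (hg_supp.comp_left Complex.ofReal_zero).toSchwartzMap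
    (Complex.ofRealCLM.contDiff.comp hg_smooth)
  have hφ : ∀ x, φ x = g x := fun x => rfl
  calc ∫ x, g x • 𝓕⁻ f x = ∫ x, φ x • 𝓕⁻ f x := by
        simp only [hφ, Complex.coe_smul]
    _ = ∫ ξ, 𝓕⁻ φ ξ • f ξ := by
        rw [SchwartzMap.fourierInv_coe,
          integral_fourierInv_smul_eq φ.integrable hf]
    _ = 𝓕⁻ (Lp.toTemperedDistribution (hf₂.toLp f)) φ := by
        rw [TemperedDistribution.fourierInv_apply, Lp.toTemperedDistribution_apply]
        refine integral_congr_ae ?_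
        filter_upwards [hf₂.coeFn_toLp] with ξ hξ
        rw [hξ]
    _ = ∫ x, g x • 𝓕⁻ (hf₂.toLp f) x := by
        rw [Lp.fourierInv_toTemperedDistribution_eq, Lp.toTemperedDistribution_apply]
        simp only [hφ, Complex.coe_smul]

theorem memLp_two_fourierInv {F : Type*} [NormedAddCommGroup F] [InnerProductSpace ℂ F]
    [CompleteSpace F] {f : V → F} (hf : Integrable f) (hf₂ : MemLp f 2) : MemLp (𝓕⁻ f) 2 :=
  (Lp.memLp _).ae_eq (fourierInv_ae_eq_fourierInv_toLp hf hf₂).symm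

end Real

theorem MeasureTheory.MemLp.comp_smul {E F : Type*} [NormedAddCommGroup E] [NormedSpace ℝ E]
    [MeasurableSpace E] [BorelSpace E] [FiniteDimensional ℝ E] [NormedAddCommGroup F]
    {μ : Measure E} [μ.IsAddHaarMeasure] {p : ℝ≥0∞} {g : E → F} (hg : MemLp g p μ)
    {r : ℝ} (hr : r ≠ 0) : MemLp (fun x => g (r • x)) p μ := by
  refine MemLp.comp_of_map ?_ (measurable_const_smul r).aemeasurable
  rw [Measure.map_addHaar_smul μ hr]
  exact hg.smul_measure ENNReal.ofReal_ne_top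

theorem FTinv_eq_smul_fourierInv {d : ℕ} (f : Rd d → ℂ) :
    FTinv f = fun x => ((2 * π) ^ (-(d : ℝ) / 2) : ℝ) • 𝓕⁻ f ((2 * π)⁻¹ • x) := by
  ext x
  rw [FTinv, Real.fourierInv_eq']
  congr 2 with ξ
  rw [inner_smul_right, real_inner_comm, smul_eq_mul]
  congr 3
  field_simp

theorem memLp_two_re_FTinv {d : ℕ} {f : Rd d → ℂ} (hf : Integrable f) (hf₂ : MemLp f 2) :
    MemLp (fun x => (FTinv f x).re) 2 := by
  rw [FTinv_eq_smul_fourierInv]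
  have h := (Real.memLp_two_fourierInv hf hf₂).comp_smul (inv_pos.2 two_pi_pos).ne'
  exact (h.const_smul ((2 * π) ^ (-(d : ℝ) / 2) : ℝ)).re

theorem Complex.re_exp_ofReal_mul_I_mul (r : ℝ) (z : ℂ) :
    (exp (r * I) * z).re = ‖z‖ * Real.cos (r + z.arg) := by
  conv_lhs => rw [← norm_mul_exp_arg_mul_I z]
  rw [mul_left_comm, ← exp_add, ← add_mul, ← ofReal_add, re_ofReal_mul, exp_ofReal_mul_I_re]

theorem re_integral_exp_mul_eq_integral_cos {V : Type*} [NormedAddCommGroup V]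
    [InnerProductSpace ℝ V] [MeasurableSpace V] [BorelSpace V] {μ : Measure V}
    {h : V → ℂ} (hh : Integrable h μ) (x : V) :
    (∫ ξ, Complex.exp (inner ℝ x ξ * Complex.I) * h ξ ∂μ).re =
      ∫ ξ, ‖h ξ‖ * cos (inner ℝ ξ x + (h ξ).arg) ∂μ := by
  have hint : Integrable (fun ξ => Complex.exp (inner ℝ x ξ * Complex.I) * h ξ) μ :=
    hh.bdd_mul (by fun_prop) (c := 1)
      (.of_forall fun ξ => (Complex.norm_exp_ofReal_mul_I _).le)
  simpa only [← Complex.re_exp_ofReal_mul_I_mul, real_inner_comm, RCLike.re_to_complex]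
    using (integral_re hint).symm

theorem re_FTinv_eq_setIntegral_cos {d : ℕ} {f : Rd d → ℂ} (hf : Integrable f) {R : ℝ}
    (hsupp : ∀ ξ : Rd d, R < ‖ξ‖ → f ξ = 0) (x : Rd d) :
    (FTinv f x).re = ∫ ξ in Metric.closedBall 0 R,
      (2 * π) ^ (-(d : ℝ) / 2) * ‖f ξ‖ * cos (inner ℝ ξ x + (f ξ).arg) := by
  rw [FTinv, Complex.real_smul, Complex.re_ofReal_mul, re_integral_exp_mul_eq_integral_cos hf,
    ← integral_const_mul, setIntegral_eq_integral_of_forall_compl_eq_zero]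
  · simp only [mul_assoc]
  · intro ξ hξ
    simp [hsupp ξ (by simpa using hξ)]

theorem barronNorm_integral_le {d : ℕ} {σ : ℝ → ℝ} (hσ : Measurable σ) (Ω : Set (Rd d)) {R : ℝ}
    (μ : Measure (Rd d)) [IsFiniteMeasure μ] [NeZero μ] (hμ : ∀ᵐ ξ ∂μ, ‖ξ‖ ≤ R)
    {a b : Rd d → ℝ} (ha : AEMeasurable a μ) (hb : AEMeasurable b μ) :
    barronNorm σ Ω R (fun x => ∫ ξ, a ξ * σ (inner ℝ ξ x + b ξ) ∂μ) ≤ ∫⁻ ξ, ‖a ξ‖ₑ ∂μ := by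
  set m := μ Set.univ
  have hm₀ : m ≠ 0 := NeZero.ne _
  have hm : m ≠ ∞ := measure_ne_top _ _
  set T : Rd d → ℝ × Rd d × ℝ := fun ξ => (m.toReal * a ξ, ξ, b ξ)
  have hT : AEMeasurable T (m⁻¹ • μ) :=
    ((ha.const_mul _).prodMk (aemeasurable_id.prodMk hb)).smul_measure _
  have hρ : (m⁻¹ • μ).map T ∈
      barronReps σ Ω R (fun x => ∫ ξ, a ξ * σ (inner ℝ ξ x + b ξ) ∂μ) := by
    refine ⟨Measure.isProbabilityMeasure_map hT, ?_, fun x _ => ?_⟩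
    · rw [ae_map_iff hT (measurableSet_le measurable_snd.fst.norm measurable_const)]
      exact Measure.ae_smul_measure hμ _
    · rw [integral_map hT (by fun_prop), integral_smul_measure]
      simp only [T, mul_assoc, ENNReal.toReal_inv, smul_eq_mul]
      rw [integral_const_mul, inv_mul_cancel_left₀ (ENNReal.toReal_ne_zero.2 ⟨hm₀, hm⟩)]
  calc barronNorm σ Ω R _ ≤ ∫⁻ q, (‖q.1‖₊ : ℝ≥0∞) ∂(m⁻¹ • μ).map T := iInf₂_le _ hρ
    _ = ∫⁻ ξ, ‖a ξ‖ₑ ∂μ := by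
      rw [lintegral_map' (by fun_prop) hT, lintegral_smul_measure]
      simp only [T, ← enorm_eq_nnnorm, enorm_mul, Real.enorm_eq_ofReal ENNReal.toReal_nonneg,
        ENNReal.ofReal_toReal hm]
      rw [lintegral_const_mul' _ _ hm, smul_eq_mul, ← mul_assoc, ENNReal.inv_mul_cancel hm₀ hm,
        one_mul]

theorem barronNorm_cos_re_FTinv_le {d : ℕ} {f : Rd d → ℂ} (hf : Integrable f) {R : ℝ}
    (hR : 0 < R) (hsupp : ∀ ξ : Rd d, R < ‖ξ‖ → f ξ = 0) :
    barronNorm cos Set.univ R (fun x => (FTinv f x).re) ≤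
      ENNReal.ofReal ((2 * π) ^ (-(d : ℝ) / 2) * ∫ ξ, ‖f ξ‖) := by
  set c : ℝ := (2 * π) ^ (-(d : ℝ) / 2)
  set B := Metric.closedBall (0 : Rd d) R
  have : IsFiniteMeasure (volume.restrict B) :=
    isFiniteMeasure_restrict.2 measure_closedBall_lt_top.ne
  have : NeZero (volume.restrict B) :=
    ⟨by simpa [Measure.restrict_eq_zero] using (Metric.measure_closedBall_pos volume 0 hR).ne'⟩
  simp only [re_FTinv_eq_setIntegral_cos hf hsupp]
  calc _ ≤ ∫⁻ ξ in B, ‖c * ‖f ξ‖‖ₑ :=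
        barronNorm_integral_le measurable_cos _ _
          (ae_restrict_of_forall_mem measurableSet_closedBall fun ξ hξ =>
            mem_closedBall_zero_iff.1 hξ)
          (hf.norm.const_mul c).aemeasurable.restrict
          (Complex.measurable_arg.comp_aemeasurable hf.aemeasurable).restrict
    _ ≤ ∫⁻ ξ, ‖c * ‖f ξ‖‖ₑ := setLIntegral_le_lintegral _ _
    _ = ENNReal.ofReal (c * ∫ ξ, ‖f ξ‖) := by
        rw [← integral_const_mul, ofReal_integral_eq_lintegral_ofReal (hf.norm.const_mul c)
          (.of_forall fun ξ => by positivity)]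
        exact lintegral_congr fun ξ => Real.enorm_eq_ofReal (by positivity)

/-- Proposition: if `f₀ ∈ L²(ℝ^d) ∩ L¹(ℝ^d)` is complex-valued and supported in the
closed ball of radius `R_f`, then `f = Re(F⁻¹f₀)` belongs to `L²(ℝ^d) ∩ B^1_{R_f}(ℝ^d)`
for the cosine activation, with `‖f‖_{B^1_{R_f}(ℝ^d)} ≤ (2π)^{-d/2} ‖f₀‖_{L¹(ℝ^d)}`. -/
theorem re_inv_fourier_is_barron {d : ℕ} (f₀ : Rd d → ℂ)
    (hL1 : Integrable f₀ volume) (hL2 : MemLp f₀ 2 volume)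
    (Rf : ℝ) (hRf : 0 < Rf) (hsupp : ∀ ξ : Rd d, Rf < ‖ξ‖ → f₀ ξ = 0) :
    MemLp (fun x => (FTinv f₀ x).re) 2 volume ∧
      barronNorm Real.cos Set.univ Rf (fun x => (FTinv f₀ x).re) ≤
        ENNReal.ofReal (((2 * π) ^ (-(d : ℝ) / 2) : ℝ) * ∫ ξ : Rd d, ‖f₀ ξ‖) :=
  ⟨memLp_two_re_FTinv hL1 hL2, barronNorm_cos_re_FTinv_le hL1 hRf hsupp⟩
end
end

section
/- If σ : ℝ → ℝ is a non-constant finite trigonometric sum σ(y) = Σ_{i=1}^k a_i cos(w_i y + b_i) with a_i ≠ 0 and distinct |w₁| < ⋯ < |w_k|, then there exist m ∈ ℕ₊ and (γ_i, ξ_i, η_i) ∈ ℝ³, i = 1,…,m, such that Σ_{i=1}^m γ_i σ(ξ_i y + η_i) = cos(y) for all y ∈ ℝ. -/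
/-!
The operator `g ↦ g(· + s) + g(· - s) - 2 cos(w' s) g` keeps the span of the functions
`σ(ξ y + η)` invariant and multiplies each summand `a cos(w y + b)` of a trigonometric sum by
`2 (cos(w s) - cos(w' s))`, killing the frequency `±w'`. With `s = π / |w_top|`, where `w_top`
is the frequency of largest modulus, applying it once for every other frequency leaves a nonzero
multiple of `cos(w_top y + b_top)`: the surviving factors are `2 (-1 - cos(w s))` with
`|w s| < π`. An affine change of variable turns this into `cos`.
-/

open Real Finset Function

noncomputable def affineCompSpan (σ : ℝ → ℝ) : Submodule ℝ (ℝ → ℝ) where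
  carrier := {g | ∃ m : ℕ, 0 < m ∧ ∃ γ ξ η : Fin m → ℝ,
    ∀ y, ∑ i, γ i * σ (ξ i * y + η i) = g y}
  zero_mem' := ⟨1, one_pos, 0, 0, 0, fun y => by simp⟩
  add_mem' := by
    rintro g₁ g₂ ⟨m₁, hm₁, γ₁, ξ₁, η₁, h₁⟩ ⟨m₂, -, γ₂, ξ₂, η₂, h₂⟩
    refine ⟨m₁ + m₂, by omega, Fin.append γ₁ γ₂, Fin.append ξ₁ ξ₂, Fin.append η₁ η₂,
      fun y => ?_⟩
    simp [Fin.sum_univ_add, h₁, h₂]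
  smul_mem' := by
    rintro c g ⟨m, hm, γ, ξ, η, h⟩
    refine ⟨m, hm, c • γ, ξ, η, fun y => ?_⟩
    simp [mul_assoc, ← mul_sum, h]

namespace affineCompSpan

variable {σ g : ℝ → ℝ}

theorem self_mem : σ ∈ affineCompSpan σ :=
  ⟨1, one_pos, 1, 1, 0, fun y => by simp⟩

theorem comp_mem (hg : g ∈ affineCompSpan σ) (p q : ℝ) :
    (fun y => g (p * y + q)) ∈ affineCompSpan σ := by
  obtain ⟨m, hm, γ, ξ, η, h⟩ := hg
  refine ⟨m, hm, γ, fun i => ξ i * p, fun i => ξ i * q + η i, fun y => ?_⟩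
  show _ = g (p * y + q)
  rw [← h]
  refine sum_congr rfl fun i _ => ?_
  ring_nf

theorem cos_mem_of_mul_cos_mem {c w b : ℝ} (hc : c ≠ 0) (hw : w ≠ 0)
    (h : (fun y => c * cos (w * y + b)) ∈ affineCompSpan σ) : cos ∈ affineCompSpan σ := by
  convert Submodule.smul_mem _ c⁻¹ (comp_mem h w⁻¹ (-b / w)) using 1
  funext y
  have hy : w * (w⁻¹ * y + -b / w) + b = y := by field_simp; ring
  simp [hy, hc]

variable {ι : Type*} [Fintype ι] (c w b : ι → ℝ)

theorem trigSum_filter_mem (s r : ℝ)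
    (h : (fun y => ∑ i, c i * cos (w i * y + b i)) ∈ affineCompSpan σ) :
    (fun y => ∑ i, c i * (2 * (cos (w i * s) - r)) * cos (w i * y + b i))
      ∈ affineCompSpan σ := by
  convert add_mem (add_mem (comp_mem h 1 s) (comp_mem h 1 (-s)))
    (Submodule.smul_mem _ (-2 * r) h) using 1
  funext y
  simp only [Pi.add_apply, Pi.smul_apply, smul_eq_mul, one_mul, mul_sum, ← sum_add_distrib]
  refine sum_congr rfl fun i _ => ?_
  rw [show w i * (y + s) + b i = w i * y + b i + w i * s by ring,
    show w i * (y + -s) + b i = w i * y + b i - w i * s by ring,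
    cos_add (w i * y + b i), cos_sub (w i * y + b i)]
  ring

theorem trigSum_prod_filter_mem [DecidableEq ι] (s : ℝ) (L : Finset ι)
    (h : (fun y => ∑ i, c i * cos (w i * y + b i)) ∈ affineCompSpan σ) :
    (fun y => ∑ i, c i * (∏ l ∈ L, 2 * (cos (w i * s) - cos (w l * s))) * cos (w i * y + b i))
      ∈ affineCompSpan σ := by
  induction L using Finset.induction_on with
  | empty => simpa using h
  | insert l L hl ih =>
    convert trigSum_filter_mem _ w b s (cos (w l * s)) ih using 4 with y i
    rw [prod_insert hl]
    ring

end affineCompSpan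

theorem cos_mul_pi_div_abs_self {v : ℝ} (hv : v ≠ 0) : cos (v * (π / |v|)) = -1 := by
  rw [← cos_abs, abs_mul, abs_div, abs_of_pos pi_pos, abs_abs,
    mul_div_cancel₀ _ (abs_ne_zero.mpr hv), cos_pi]

theorem neg_one_lt_cos_mul_pi_div_abs {u v : ℝ} (huv : |u| < |v|) :
    -1 < cos (u * (π / |v|)) := by
  have hv : 0 < |v| := (abs_nonneg u).trans_lt huv
  rw [← cos_abs, ← cos_pi]
  refine cos_lt_cos_of_nonneg_of_le_pi (abs_nonneg _) le_rfl ?_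
  rw [abs_mul, abs_div, abs_of_pos pi_pos, abs_abs, mul_div_assoc', div_lt_iff₀ hv, mul_comm]
  exact mul_lt_mul_of_pos_left huv pi_pos

theorem exists_ne_zero_of_trigSum_ne {ι : Type*} [Fintype ι] {a w b : ι → ℝ}
    (hnc : ∃ y₁ y₂, ∑ i, a i * cos (w i * y₁ + b i) ≠ ∑ i, a i * cos (w i * y₂ + b i)) :
    ∃ i, w i ≠ 0 := by
  by_contra! hw
  obtain ⟨y₁, y₂, hne⟩ := hnc
  simp [hw] at hne

theorem cos_mem_affineCompSpan_trigSum {ι : Type*} [Fintype ι] (a w b : ι → ℝ)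
    (ha : ∀ i, a i ≠ 0) (hw : Injective fun i => |w i|)
    (hnc : ∃ y₁ y₂, ∑ i, a i * cos (w i * y₁ + b i) ≠ ∑ i, a i * cos (w i * y₂ + b i)) :
    cos ∈ affineCompSpan (fun y => ∑ i, a i * cos (w i * y + b i)) := by
  classical
  obtain ⟨i₀, hi₀⟩ := exists_ne_zero_of_trigSum_ne hnc
  obtain ⟨t, -, ht⟩ := exists_max_image univ (fun i => |w i|) ⟨i₀, mem_univ _⟩
  have hwt : w t ≠ 0 := abs_pos.mp ((abs_pos.mpr hi₀).trans_le (ht i₀ (mem_univ _)))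
  set s := π / |w t|
  set P := ∏ l ∈ univ.erase t, 2 * (cos (w t * s) - cos (w l * s))
  have hP : P ≠ 0 := prod_ne_zero_iff.mpr fun l hl => by
    have hlt : |w l| < |w t| := (ht l (mem_univ _)).lt_of_ne (hw.ne (ne_of_mem_erase hl))
    linarith [cos_mul_pi_div_abs_self hwt, neg_one_lt_cos_mul_pi_div_abs hlt]
  have hsingle : (fun y => a t * P * cos (w t * y + b t))
      ∈ affineCompSpan (fun y => ∑ i, a i * cos (w i * y + b i)) := by
    convert affineCompSpan.trigSum_prod_filter_mem a w b s (univ.erase t)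
      affineCompSpan.self_mem using 2 with y
    rw [sum_eq_single t (fun i _ hi => by rw [prod_eq_zero (mem_erase.mpr ⟨hi, mem_univ i⟩)
      (by ring), mul_zero, zero_mul]) (by simp)]
  exact affineCompSpan.cos_mem_of_mul_cos_mem (mul_ne_zero (ha t) hP) hwt hsingle

theorem cos_from_trig_sum_general (k : ℕ) (a w b : Fin k → ℝ)
    (ha : ∀ i, a i ≠ 0) (hw : StrictMono fun i => |w i|)
    (σ : ℝ → ℝ) (hσ : ∀ y, σ y = ∑ i, a i * Real.cos (w i * y + b i))
    (hnc : ∃ y₁ y₂, σ y₁ ≠ σ y₂) :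
    ∃ m : ℕ, 0 < m ∧ ∃ γ ξ η : Fin m → ℝ,
      ∀ y, ∑ i, γ i * σ (ξ i * y + η i) = Real.cos y := by
  obtain rfl : σ = fun y => ∑ i, a i * cos (w i * y + b i) := funext hσ
  exact cos_mem_affineCompSpan_trigSum a w b ha hw.injective hnc

/-- If `σ` is a non-constant finite trigonometric sum `σ(y) = Σᵢ aᵢ cos(wᵢy + bᵢ)` with
`aᵢ ≠ 0` and `|w₁| < ⋯ < |w_k|`, then `cos` is a finite linear combination of scaled and
shifted copies of `σ`: there exist `m ≥ 1` and `(γᵢ, ξᵢ, ηᵢ)` with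
`Σᵢ γᵢ σ(ξᵢ y + ηᵢ) = cos y` for all `y`. -/
theorem cos_from_trig_sum (k : ℕ) (hk : 0 < k) (a w b : Fin k → ℝ)
    (ha : ∀ i, a i ≠ 0) (hw : StrictMono fun i => |w i|)
    (σ : ℝ → ℝ) (hσ : ∀ y, σ y = ∑ i, a i * Real.cos (w i * y + b i))
    (hnc : ∃ y₁ y₂, σ y₁ ≠ σ y₂) :
    ∃ m : ℕ, 0 < m ∧ ∃ γ ξ η : Fin m → ℝ,
      ∀ y, ∑ i, γ i * σ (ξ i * y + η i) = Real.cos y :=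
  cos_from_trig_sum_general k a w b ha hw σ hσ hnc
end
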